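/- arXiv:1303.1216 — 2 statements merged into one kernel-verified Lean document; each statement's English description precedes it below -/
import Mathlib

section
/- Let Γ¹, …, Γ⁵ be pre-Hilbert A-modules and Γ¹ →^{D₁} Γ² →^{D₂} Γ³ →^{D₃} Γ⁴ →^{D₄} Γ⁵ a complex of adjointable morphisms (D_{i+1} ∘ D_i = 0). Let Δ_i = D_{i-1} ∘ D_{i-1}* + D_i* ∘ D_i (with D₀ := 0). Suppose for i = 1,…,4 there exist morphisms g_i, p_i : Γⁱ → Γⁱ with 1 = g_i ∘ Δ_i + p_i, 1 = Δ_i ∘ g_i + p_i, and Δ_i ∘ p_i = 0. Then p_{i+1} ∘ D_i = 0 for i = 1, 2, 3. -/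
/-- A pre-Hilbert module over a unital C*-algebra `A`: a left `A`-module equipped with an
`A`-valued inner product (`A`-linear in the first argument, conjugate-symmetric, positive
definite), whose norm is the one induced by the inner product. -/
class PreHilbertModule (A : Type*) (U : Type*) [CStarAlgebra A] [PartialOrder A]
    [StarOrderedRing A] [NormedAddCommGroup U] [Module A U] extends Inner A U where
  inner_add_left (x y z : U) : inner (x + y) z = inner x z + inner y z
  inner_smul_left (a : A) (x y : U) : inner (a • x) y = a * inner x y
  star_inner (x y : U) : star (inner x y) = inner y x
  inner_self_nonneg (x : U) : 0 ≤ inner x x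
  inner_self_eq_zero (x : U) : inner x x = 0 ↔ x = 0
  norm_eq (x : U) : ‖x‖ = Real.sqrt ‖inner x x‖

open scoped InnerProductSpace

namespace PreHilbertModule

variable {A : Type*} [CStarAlgebra A] [PartialOrder A] [StarOrderedRing A]
  {U V W : Type*}
  [NormedAddCommGroup U] [Module A U] [PreHilbertModule A U]
  [NormedAddCommGroup V] [Module A V] [PreHilbertModule A V]
  [NormedAddCommGroup W] [Module A W] [PreHilbertModule A W]

lemma inner_zero_left (x : U) : ⟪(0 : U), x⟫_A = 0 := by
  simpa using (inner_add_left (A := A) (0 : U) 0 x).symm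

lemma inner_zero_right (x : U) : ⟪x, (0 : U)⟫_A = 0 := by
  rw [← star_inner, inner_zero_left, star_zero]

lemma inner_add_right (x y z : U) : ⟪x, y + z⟫_A = ⟪x, y⟫_A + ⟪x, z⟫_A := by
  rw [← star_inner, inner_add_left, star_add, star_inner, star_inner]

lemma inner_self_eq_zero_of_add_inner_self_eq_zero {x : U} {y : V}
    (h : ⟪x, x⟫_A + ⟪y, y⟫_A = 0) : x = 0 :=
  (inner_self_eq_zero x).mp <|
    ((add_eq_zero_iff_of_nonneg (inner_self_nonneg x) (inner_self_nonneg y)).mp h).1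

def IsAdjointPair (D : U →L[A] V) (Ds : V →L[A] U) : Prop :=
  ∀ u v, ⟪D u, v⟫_A = ⟪u, Ds v⟫_A

namespace IsAdjointPair

variable {D : U →L[A] V} {Ds : V →L[A] U}

lemma symm (hD : IsAdjointPair D Ds) : IsAdjointPair Ds D := fun v u => by
  rw [← star_inner, ← hD, star_inner]

lemma comp {E : V →L[A] W} {Es : W →L[A] V} (hD : IsAdjointPair D Ds)
    (hE : IsAdjointPair E Es) : IsAdjointPair (E.comp D) (Ds.comp Es) := fun u w => by
  rw [ContinuousLinearMap.comp_apply, ContinuousLinearMap.comp_apply, hE, hD]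

lemma add {D' : U →L[A] V} {Ds' : V →L[A] U} (hD : IsAdjointPair D Ds)
    (hD' : IsAdjointPair D' Ds') : IsAdjointPair (D + D') (Ds + Ds') := fun u v => by
  simp only [_root_.add_apply, inner_add_left, inner_add_right, hD u, hD' u]

lemma laplacian_self {E : V →L[A] W} {Es : W →L[A] V} (hD : IsAdjointPair D Ds)
    (hE : IsAdjointPair E Es) :
    IsAdjointPair (D.comp Ds + Es.comp E) (D.comp Ds + Es.comp E) :=
  (hD.symm.comp hD).add (hE.comp hE.symm)

/-- `⟪Δ v, v⟫ = ⟪D* v, D* v⟫ + ⟪E v, E v⟫` is a sum of positive elements of `A`. -/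
lemma apply_eq_zero_of_laplacian_apply_eq_zero {E : V →L[A] W} {Es : W →L[A] V}
    (hD : IsAdjointPair D Ds) (hE : IsAdjointPair E Es) {v : V}
    (hv : (D.comp Ds + Es.comp E) v = 0) : Ds v = 0 := by
  refine inner_self_eq_zero_of_add_inner_self_eq_zero (A := A) (y := E v) ?_
  calc ⟪Ds v, Ds v⟫_A + ⟪E v, E v⟫_A = ⟪(D.comp Ds + Es.comp E) v, v⟫_A := by
        rw [_root_.add_apply, inner_add_left, ContinuousLinearMap.comp_apply,
          ContinuousLinearMap.comp_apply, hD, hE.symm]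
    _ = 0 := by rw [hv, inner_zero_left]

end IsAdjointPair

/-- If `p` is the projection of a parametrix of the Laplacian `Δ = D D* + E* E`, then `p D = 0`:
`v = p (D x)` is harmonic, so `⟪v, v⟫ = ⟪D x - Δ (g (D x)), v⟫ = ⟪x, D* v⟫ - ⟪g (D x), Δ v⟫ = 0`. -/
lemma parametrix_proj_comp_eq_zero {D : U →L[A] V} {Ds : V →L[A] U} {E : V →L[A] W}
    {Es : W →L[A] V}
    (hD : IsAdjointPair D Ds) (hE : IsAdjointPair E Es) {Δ g p : V →L[A] V}
    (hΔ : Δ = D.comp Ds + Es.comp E) (hgp : ContinuousLinearMap.id A V = Δ.comp g + p)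
    (hp : Δ.comp p = 0) : p.comp D = 0 := by
  subst hΔ
  ext x
  set v := p (D x)
  have hΔv : (D.comp Ds + Es.comp E) v = 0 := by
    simpa using congr($hp (D x))
  have hDx : D x = (D.comp Ds + Es.comp E) (g (D x)) + v := by
    simpa using congr($hgp (D x))
  refine (inner_self_eq_zero (A := A) v).mp ?_
  calc ⟪v, v⟫_A = ⟪(D.comp Ds + Es.comp E) (g (D x)), v⟫_A + ⟪v, v⟫_A := by
        rw [hD.laplacian_self hE, hΔv, inner_zero_right, zero_add]
    _ = ⟪D x, v⟫_A := by rw [← inner_add_left, ← hDx]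
    _ = 0 := by rw [hD, hD.apply_eq_zero_of_laplacian_apply_eq_zero hE hΔv, inner_zero_right]

end PreHilbertModule

open PreHilbertModule

theorem parametrix_proj_comp_differential_eq_zero_general
    {A : Type*} [CStarAlgebra A] [PartialOrder A] [StarOrderedRing A]
    {Γ1 Γ2 Γ3 Γ4 Γ5 : Type*}
    [NormedAddCommGroup Γ1] [Module A Γ1] [PreHilbertModule A Γ1]
    [NormedAddCommGroup Γ2] [Module A Γ2] [PreHilbertModule A Γ2]
    [NormedAddCommGroup Γ3] [Module A Γ3] [PreHilbertModule A Γ3]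
    [NormedAddCommGroup Γ4] [Module A Γ4] [PreHilbertModule A Γ4]
    [NormedAddCommGroup Γ5] [Module A Γ5] [PreHilbertModule A Γ5]
    (D1 : Γ1 →L[A] Γ2) (D2 : Γ2 →L[A] Γ3) (D3 : Γ3 →L[A] Γ4) (D4 : Γ4 →L[A] Γ5)
    (D1s : Γ2 →L[A] Γ1) (D2s : Γ3 →L[A] Γ2) (D3s : Γ4 →L[A] Γ3) (D4s : Γ5 →L[A] Γ4)
    (hD1 : ∀ u v, (inner A (D1 u) v : A) = inner A u (D1s v))
    (hD2 : ∀ u v, (inner A (D2 u) v : A) = inner A u (D2s v))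
    (hD3 : ∀ u v, (inner A (D3 u) v : A) = inner A u (D3s v))
    (hD4 : ∀ u v, (inner A (D4 u) v : A) = inner A u (D4s v))
    -- the associated Laplacians (with `D₀ := 0`)
    (Δ2 : Γ2 →L[A] Γ2) (Δ3 : Γ3 →L[A] Γ3) (Δ4 : Γ4 →L[A] Γ4)
    (hΔ2 : Δ2 = D1.comp D1s + D2s.comp D2)
    (hΔ3 : Δ3 = D2.comp D2s + D3s.comp D3)
    (hΔ4 : Δ4 = D3.comp D3s + D4s.comp D4)
    -- the parametrices
    (g2 p2 : Γ2 →L[A] Γ2) (g3 p3 : Γ3 →L[A] Γ3) (g4 p4 : Γ4 →L[A] Γ4)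
    (h2b : ContinuousLinearMap.id A Γ2 = Δ2.comp g2 + p2)
    (h2c : Δ2.comp p2 = 0)
    (h3b : ContinuousLinearMap.id A Γ3 = Δ3.comp g3 + p3)
    (h3c : Δ3.comp p3 = 0)
    (h4b : ContinuousLinearMap.id A Γ4 = Δ4.comp g4 + p4)
    (h4c : Δ4.comp p4 = 0) :
    p2.comp D1 = 0 ∧ p3.comp D2 = 0 ∧ p4.comp D3 = 0 :=
  ⟨parametrix_proj_comp_eq_zero hD1 hD2 hΔ2 h2b h2c,
    parametrix_proj_comp_eq_zero hD2 hD3 hΔ3 h3b h3c,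
    parametrix_proj_comp_eq_zero hD3 hD4 hΔ4 h4b h4c⟩

/-- part of Theorem 3: for a length-five complex of adjointable morphisms of
pre-Hilbert `A`-modules possessing parametrices `g_i, p_i` for the associated Laplacians
`Δ_i = D_{i-1} ∘ D_{i-1}* + D_i* ∘ D_i` (with `D₀ := 0`), one has `p_{i+1} ∘ D_i = 0` for
`i = 1, 2, 3`. -/
theorem parametrix_proj_comp_differential_eq_zero
    {A : Type*} [CStarAlgebra A] [PartialOrder A] [StarOrderedRing A]
    {Γ1 Γ2 Γ3 Γ4 Γ5 : Type*}
    [NormedAddCommGroup Γ1] [Module A Γ1] [PreHilbertModule A Γ1]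
    [NormedAddCommGroup Γ2] [Module A Γ2] [PreHilbertModule A Γ2]
    [NormedAddCommGroup Γ3] [Module A Γ3] [PreHilbertModule A Γ3]
    [NormedAddCommGroup Γ4] [Module A Γ4] [PreHilbertModule A Γ4]
    [NormedAddCommGroup Γ5] [Module A Γ5] [PreHilbertModule A Γ5]
    (D1 : Γ1 →L[A] Γ2) (D2 : Γ2 →L[A] Γ3) (D3 : Γ3 →L[A] Γ4) (D4 : Γ4 →L[A] Γ5)
    (D1s : Γ2 →L[A] Γ1) (D2s : Γ3 →L[A] Γ2) (D3s : Γ4 →L[A] Γ3) (D4s : Γ5 →L[A] Γ4)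
    (hD1 : ∀ u v, (inner A (D1 u) v : A) = inner A u (D1s v))
    (hD2 : ∀ u v, (inner A (D2 u) v : A) = inner A u (D2s v))
    (hD3 : ∀ u v, (inner A (D3 u) v : A) = inner A u (D3s v))
    (hD4 : ∀ u v, (inner A (D4 u) v : A) = inner A u (D4s v))
    (hc1 : D2.comp D1 = 0) (hc2 : D3.comp D2 = 0) (hc3 : D4.comp D3 = 0)
    -- the associated Laplacians (with `D₀ := 0`)
    (Δ1 : Γ1 →L[A] Γ1) (Δ2 : Γ2 →L[A] Γ2) (Δ3 : Γ3 →L[A] Γ3) (Δ4 : Γ4 →L[A] Γ4)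
    (hΔ1 : Δ1 = D1s.comp D1)
    (hΔ2 : Δ2 = D1.comp D1s + D2s.comp D2)
    (hΔ3 : Δ3 = D2.comp D2s + D3s.comp D3)
    (hΔ4 : Δ4 = D3.comp D3s + D4s.comp D4)
    -- the parametrices
    (g1 p1 : Γ1 →L[A] Γ1) (g2 p2 : Γ2 →L[A] Γ2) (g3 p3 : Γ3 →L[A] Γ3) (g4 p4 : Γ4 →L[A] Γ4)
    (h1a : ContinuousLinearMap.id A Γ1 = g1.comp Δ1 + p1)
    (h1b : ContinuousLinearMap.id A Γ1 = Δ1.comp g1 + p1)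
    (h1c : Δ1.comp p1 = 0)
    (h2a : ContinuousLinearMap.id A Γ2 = g2.comp Δ2 + p2)
    (h2b : ContinuousLinearMap.id A Γ2 = Δ2.comp g2 + p2)
    (h2c : Δ2.comp p2 = 0)
    (h3a : ContinuousLinearMap.id A Γ3 = g3.comp Δ3 + p3)
    (h3b : ContinuousLinearMap.id A Γ3 = Δ3.comp g3 + p3)
    (h3c : Δ3.comp p3 = 0)
    (h4a : ContinuousLinearMap.id A Γ4 = g4.comp Δ4 + p4)
    (h4b : ContinuousLinearMap.id A Γ4 = Δ4.comp g4 + p4)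
    (h4c : Δ4.comp p4 = 0) :
    p2.comp D1 = 0 ∧ p3.comp D2 = 0 ∧ p4.comp D3 = 0 :=
  parametrix_proj_comp_differential_eq_zero_general D1 D2 D3 D4 D1s D2s D3s D4s hD1 hD2 hD3 hD4 Δ2
    Δ3 Δ4 hΔ2 hΔ3 hΔ4 g2 p2 g3 p3 g4 p4 h2b h2c h3b h3c h4b h4c
end

section
/- Let U, V, W be Hilbert A-modules and σ : U → V, σ' : V → W adjointable maps such that the sequence U →^{σ} V →^{σ'} W is exact (Rng σ = Ker σ') and the image of σ' is closed in W. Then Σ = σ ∘ σ* + σ'* ∘ σ' : V → V is bijective, i.e. a Hilbert A-module automorphism of V. -/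
/-!
Injectivity: if `Σ v = 0` then `⟪σ* v, σ* v⟫ + ⟪σ' v, σ' v⟫ = ⟪Σ v, v⟫ = 0`, so `σ* v = 0` and
`σ' v = 0`; exactness writes `v = σ u`, and then `⟪v, v⟫ = ⟪u, σ* v⟫ = 0`.

Surjectivity rests on the fact that for an adjointable `T` with closed range, `T T*` maps
`range T` onto itself. By the open mapping theorem every `w ∈ range T` has a preimage `x` with
`‖x‖ ≤ C ‖w‖`, and the Cauchy–Schwarz inequality `⟪w, w⟫² = ⟪T* w, x⟫ ⟪x, T* w⟫ ≤ ‖x‖² ⟪T* w, T* w⟫`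
bounds `⟪T* w, T* w⟫` from below. Together with `⟪T y, T y⟫ ≤ ‖T‖² ⟪y, y⟫` this makes `1 - t T T*`
a strict contraction of `range T` for small `t > 0`, so `t T T*` is invertible there (Neumann
series). Given `v`, pick `z` with `σ' σ'* σ' z = σ' v`; then `v - Σ z ∈ ker σ' = range σ`, which
is closed, so `v - Σ z = σ σ* σ u` for some `u`, and `Σ (z + σ u) = v`.
-/

theorem CStarAlgebra.sub_smul_mul_self_le {A : Type*} [CStarAlgebra A] [PartialOrder A]
    [StarOrderedRing A] {a : A} (ha : 0 ≤ a) {M μ : ℝ} (haM : ‖a‖ ≤ M) (hμ : 0 ≤ μ)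
    (hμM : 2 * μ * M ≤ 1) :
    a - μ • (a * a) ≤ algebraMap ℝ A (M - μ * M ^ 2) := by
  have haM' : a ≤ algebraMap ℝ A M :=
    ha.isSelfAdjoint.le_algebraMap_norm_self.trans (algebraMap_mono A haM)
  have h₁ : 0 ≤ algebraMap ℝ A M - a := sub_nonneg.2 haM'
  have h₂ : 0 ≤ algebraMap ℝ A (1 - μ * M) - μ • a := by
    rw [sub_nonneg]
    calc μ • a ≤ μ • algebraMap ℝ A M := smul_le_smul_of_nonneg_left haM' hμ
      _ ≤ algebraMap ℝ A (1 - μ * M) := by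
        rw [Algebra.smul_def, ← map_mul]; exact algebraMap_mono A (by linarith)
  have hcomm : Commute (algebraMap ℝ A M - a) (algebraMap ℝ A (1 - μ * M) - μ • a) :=
    (Algebra.commute_algebraMap_left M _).sub_left
      ((Algebra.commute_algebraMap_right _ a).sub_right ((Commute.refl a).smul_right μ))
  -- the gap is the product `(M - a) * ((1 - μ M) - μ a)` of commuting nonnegative elements
  rw [← sub_nonneg]
  convert hcomm.mul_nonneg h₁ h₂ using 1
  simp only [Algebra.algebraMap_eq_smul_one, sub_mul, mul_sub, one_mul, mul_one, smul_mul_assoc,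
    mul_smul_comm]
  module

theorem ContinuousLinearMap.surjOn_of_norm_sub_le {𝕜 G : Type*} [NontriviallyNormedField 𝕜]
    [NormedAddCommGroup G] [NormedSpace 𝕜 G] [CompleteSpace G] (S : G →L[𝕜] G)
    {q : Submodule 𝕜 G} (hq : IsClosed (q : Set G)) (hSq : ∀ w ∈ q, S w ∈ q) {θ : ℝ}
    (hθ : θ < 1) (hS : ∀ w ∈ q, ‖w - S w‖ ≤ θ * ‖w‖) :
    Set.SurjOn S q q := by
  have : CompleteSpace q := hq.completeSpace_coe
  set L := S.restrict hSq
  have hL : ‖1 - L‖ < 1 :=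
    ((1 - L).opNorm_le_bound (le_max_right θ 0) fun w ↦ (hS w w.2).trans <|
      mul_le_mul_of_nonneg_right (le_max_left θ 0) (norm_nonneg _)).trans_lt (max_lt hθ one_pos)
  have hLunit : IsUnit L := by simpa using isUnit_one_sub_of_norm_lt_one hL
  intro d hd
  obtain ⟨y, hy⟩ := (isUnit_iff_bijective.1 hLunit).2 ⟨d, hd⟩
  exact ⟨y, y.2, congrArg Subtype.val hy⟩

namespace PreHilbertModule

variable {A : Type*} [CStarAlgebra A] [PartialOrder A] [StarOrderedRing A]
variable {E F : Type*} [NormedAddCommGroup E] [Module A E] [PreHilbertModule A E]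
  [NormedAddCommGroup F] [Module A F] [PreHilbertModule A F]

local notation "⟪" x ", " y "⟫" => (inner A x y : A)

theorem inner_zero_left_s10 (y : E) : ⟪0, y⟫ = 0 := by
  simpa using inner_smul_left (0 : A) (0 : E) y

theorem inner_zero_right_s10 (x : E) : ⟪x, 0⟫ = 0 := by
  rw [← star_inner, inner_zero_left_s10, star_zero]

theorem inner_sub_left (x y z : E) : ⟪x - y, z⟫ = ⟪x, z⟫ - ⟪y, z⟫ :=
  eq_sub_of_add_eq <| by rw [← inner_add_left, sub_add_cancel]

theorem inner_sub_right (x y z : E) : ⟪x, y - z⟫ = ⟪x, y⟫ - ⟪x, z⟫ := by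
  rw [← star_inner, inner_sub_left, star_sub, star_inner, star_inner]

theorem inner_smul_right (a : A) (x y : E) : ⟪x, a • y⟫ = ⟪x, y⟫ * star a := by
  rw [← star_inner, inner_smul_left, star_mul, star_inner]

theorem isSelfAdjoint_inner_self (x : E) : IsSelfAdjoint ⟪x, x⟫ := star_inner x x

theorem norm_sq_eq_norm_inner_self (x : E) : ‖x‖ ^ 2 = ‖⟪x, x⟫‖ := by
  rw [norm_eq (A := A), Real.sq_sqrt (norm_nonneg _)]

theorem inner_self_le_algebraMap_norm_sq (x : E) : ⟪x, x⟫ ≤ algebraMap ℝ A (‖x‖ ^ 2) := by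
  rw [norm_sq_eq_norm_inner_self (A := A)]
  exact (isSelfAdjoint_inner_self x).le_algebraMap_norm_self

theorem inner_sub_smul_self (c : A) (u v : E) :
    ⟪v - c • u, v - c • u⟫ = ⟪v, v⟫ - c * ⟪u, v⟫ - ⟪v, u⟫ * star c + c * ⟪u, u⟫ * star c := by
  simp only [inner_sub_left, inner_sub_right, inner_smul_left, inner_smul_right, sub_mul, mul_assoc]
  abel

protected theorem norm_smul_le (a : A) (x : E) : ‖a • x‖ ≤ ‖a‖ * ‖x‖ := by
  refine le_of_pow_le_pow_left₀ two_ne_zero (by positivity) ?_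
  calc ‖a • x‖ ^ 2 = ‖a * ⟪x, x⟫ * star a‖ := by
        rw [norm_sq_eq_norm_inner_self (A := A), inner_smul_left, inner_smul_right, mul_assoc]
    _ ≤ ‖a‖ * ‖⟪x, x⟫‖ * ‖star a‖ := norm_mul₃_le
    _ = (‖a‖ * ‖x‖) ^ 2 := by rw [norm_star, ← norm_sq_eq_norm_inner_self]; ring

theorem inner_mul_inner_swap_le (u v : E) : ⟪v, u⟫ * ⟪u, v⟫ ≤ ‖u‖ ^ 2 • ⟪v, v⟫ := by
  rcases eq_or_ne u 0 with rfl | hu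
  · simp [inner_zero_left_s10, inner_zero_right_s10]
  have hM : 0 < ‖u‖ ^ 2 := by positivity
  set c : A := (‖u‖ ^ 2)⁻¹ • ⟪v, u⟫
  set s : A := (‖u‖ ^ 2)⁻¹ • (⟪v, u⟫ * ⟪u, v⟫)
  have hc : star c = (‖u‖ ^ 2)⁻¹ • ⟪u, v⟫ := by rw [star_smul, star_trivial, star_inner]
  have hconj : c * ⟪u, u⟫ * star c ≤ s := by
    calc _ ≤ ‖⟪u, u⟫‖ • (c * star c) :=
          CStarAlgebra.star_right_conjugate_le_norm_smul (isSelfAdjoint_inner_self u)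
      _ = s := by
          rw [← norm_sq_eq_norm_inner_self (A := A), hc, smul_mul_smul_comm, smul_smul]
          congr 1
          field_simp
  have key := inner_self_nonneg (A := A) (v - c • u)
  rw [inner_sub_smul_self, smul_mul_assoc, hc, mul_smul_comm, ← hc] at key
  have hs : s ≤ ⟪v, v⟫ := by
    rw [← sub_nonneg]
    calc (0 : A) ≤ _ := key
      _ ≤ ⟪v, v⟫ - s - s + s := by gcongr
      _ = ⟪v, v⟫ - s := sub_add_cancel _ _
  calc ⟪v, u⟫ * ⟪u, v⟫ = ‖u‖ ^ 2 • s := by rw [smul_smul, mul_inv_cancel₀ hM.ne', one_smul]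
    _ ≤ ‖u‖ ^ 2 • ⟪v, v⟫ := by gcongr

open CFC in
theorem inner_map_self_le_smul_add_algebraMap (T : E →L[A] F) {B : ℝ}
    (hB : ∀ z, ‖T z‖ ≤ B * ‖z‖) (x : E) {ε : ℝ} (hε : 0 < ε) :
    ⟪T x, T x⟫ ≤ B ^ 2 • (⟪x, x⟫ + algebraMap ℝ A ε) := by
  set r := ⟪x, x⟫ + algebraMap ℝ A ε
  have hr : IsStrictlyPositive r :=
    (isStrictlyPositive_algebraMap hε).nonneg_add (inner_self_nonneg x)
  -- `c • x` lies in the unit ball, and `c` is a unit, so the bound on `T (c • x)` conjugates back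
  set c := r ^ (-(1 / 2) : ℝ)
  have hc : IsSelfAdjoint c := rpow_nonneg.isSelfAdjoint
  have hcrc : c * r * c = 1 := conjugate_rpow_neg_one_half r
  have hcx : ‖c • x‖ ^ 2 ≤ 1 := by
    rw [norm_sq_eq_norm_inner_self (A := A), inner_smul_left, inner_smul_right, hc.star_eq,
      ← mul_assoc, CStarAlgebra.norm_le_one_iff_of_nonneg _
        (conjugate_nonneg_of_nonneg (inner_self_nonneg x) rpow_nonneg), ← hcrc]
    exact hc.conjugate_le_conjugate
      (le_add_of_nonneg_right (isStrictlyPositive_algebraMap hε).nonneg)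
  have hTcx : c * ⟪T x, T x⟫ * c ≤ B ^ 2 • 1 := by
    have hnorm : ‖T (c • x)‖ ^ 2 ≤ B ^ 2 :=
      calc ‖T (c • x)‖ ^ 2 ≤ (B * ‖c • x‖) ^ 2 := pow_le_pow_left₀ (norm_nonneg _) (hB _) 2
        _ ≤ B ^ 2 := by rw [mul_pow]; exact mul_le_of_le_one_right (sq_nonneg B) hcx
    calc c * ⟪T x, T x⟫ * c = ⟪T (c • x), T (c • x)⟫ := by
          rw [map_smul, inner_smul_left, inner_smul_right, hc.star_eq, mul_assoc]
      _ ≤ algebraMap ℝ A (‖T (c • x)‖ ^ 2) := inner_self_le_algebraMap_norm_sq _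
      _ ≤ B ^ 2 • 1 := by
          rw [Algebra.algebraMap_eq_smul_one]
          exact smul_le_smul_of_nonneg_right hnorm zero_le_one
  have hcu : IsUnit c := (IsStrictlyPositive.rpow r _ hr).isUnit
  rw [← sub_nonneg, ← hcu.star_left_conjugate_nonneg_iff, hc.star_eq, mul_sub, sub_mul,
    mul_smul_comm, smul_mul_assoc, hcrc, sub_nonneg]
  exact hTcx

open Filter Topology in
theorem inner_map_self_le (T : E →L[A] F) {B : ℝ} (hB : ∀ z, ‖T z‖ ≤ B * ‖z‖) (x : E) :
    ⟪T x, T x⟫ ≤ B ^ 2 • ⟪x, x⟫ := by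
  have hlim : Tendsto (fun ε : ℝ ↦ B ^ 2 • (⟪x, x⟫ + algebraMap ℝ A ε)) (𝓝[>] 0)
      (𝓝 (B ^ 2 • ⟪x, x⟫)) := by
    have : Continuous fun ε : ℝ ↦ B ^ 2 • (⟪x, x⟫ + algebraMap ℝ A ε) := by
      have := continuous_algebraMap ℝ A
      fun_prop
    simpa using (this.tendsto 0).mono_left nhdsWithin_le_nhds
  exact ge_of_tendsto hlim <| eventually_nhdsWithin_of_forall fun ε hε ↦
    inner_map_self_le_smul_add_algebraMap T hB x hε

variable (A E) in
/-- Not an instance: `A` cannot be inferred from `E`. -/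
noncomputable abbrev normedSpaceReal : NormedSpace ℝ E where
  toModule := Module.compHom E (algebraMap ℝ A)
  norm_smul_le r x := by
    rcases subsingleton_or_nontrivial A with hA | hA
    · have := Module.subsingleton A E
      simp [Subsingleton.elim x 0]
    · show ‖algebraMap ℝ A r • x‖ ≤ ‖r‖ * ‖x‖
      exact (PreHilbertModule.norm_smul_le _ x).trans_eq (by rw [norm_algebraMap'])

section Adjoint

variable {T : E →L[A] F} {Ts : F →L[A] E}

theorem inner_self_sub_smul_comp_adjoint_le (hT : ∀ x y, ⟪T x, y⟫ = ⟪x, Ts y⟫) {B t : ℝ}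
    (hB : ∀ z, ‖T z‖ ≤ B * ‖z‖) (ht : 0 ≤ t) (htB : t * B ^ 2 ≤ 1) (w : F) :
    ⟪w - algebraMap ℝ A t • T (Ts w), w - algebraMap ℝ A t • T (Ts w)⟫ ≤
      ⟪w, w⟫ - t • ⟪Ts w, Ts w⟫ := by
  set b := ⟪Ts w, Ts w⟫
  have h₁ : ⟪T (Ts w), w⟫ = b := hT _ _
  have h₂ : ⟪w, T (Ts w)⟫ = b := by rw [← star_inner, h₁, (isSelfAdjoint_inner_self _).star_eq]
  have hq : t ^ 2 • ⟪T (Ts w), T (Ts w)⟫ ≤ t • b :=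
    calc _ ≤ t ^ 2 • (B ^ 2 • b) :=
          smul_le_smul_of_nonneg_left (inner_map_self_le T hB _) (sq_nonneg t)
      _ = (t * (t * B ^ 2)) • b := by rw [smul_smul]; ring_nf
      _ ≤ t • b := smul_le_smul_of_nonneg_right (mul_le_of_le_one_right ht htB)
          (inner_self_nonneg _)
  calc _ = ⟪w, w⟫ - t • b - t • b + t ^ 2 • ⟪T (Ts w), T (Ts w)⟫ := by
        rw [inner_sub_smul_self, h₁, h₂, ← algebraMap_star_comm, star_trivial,
          ← Algebra.commutes, ← Algebra.smul_def, mul_assoc, ← Algebra.commutes,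
          ← Algebra.smul_def, ← Algebra.smul_def, smul_smul, sq]
    _ ≤ ⟪w, w⟫ - t • b - t • b + t • b := by gcongr
    _ = _ := sub_add_cancel _ _

theorem inner_self_mul_self_le_smul_inner_adjoint (hT : ∀ x y, ⟪T x, y⟫ = ⟪x, Ts y⟫) {C : ℝ}
    {x : E} (hx : ‖x‖ ≤ C * ‖T x‖) :
    ⟪T x, T x⟫ * ⟪T x, T x⟫ ≤ (C ^ 2 * ‖T x‖ ^ 2) • ⟪Ts (T x), Ts (T x)⟫ := by
  have h₁ : ⟪x, Ts (T x)⟫ = ⟪T x, T x⟫ := (hT _ _).symm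
  have h₂ : ⟪Ts (T x), x⟫ = ⟪T x, T x⟫ := by
    rw [← star_inner, h₁, (isSelfAdjoint_inner_self _).star_eq]
  have hx' : ‖x‖ ^ 2 ≤ C ^ 2 * ‖T x‖ ^ 2 := by
    rw [← mul_pow]; exact pow_le_pow_left₀ (norm_nonneg x) hx 2
  calc _ ≤ ‖x‖ ^ 2 • ⟪Ts (T x), Ts (T x)⟫ := by
        simpa only [h₁, h₂] using inner_mul_inner_swap_le (A := A) x (Ts (T x))
    _ ≤ _ := smul_le_smul_of_nonneg_right hx' (inner_self_nonneg _)

theorem norm_sub_smul_comp_adjoint_le (hT : ∀ x y, ⟪T x, y⟫ = ⟪x, Ts y⟫) {B C t : ℝ}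
    (hB : ∀ z, ‖T z‖ ≤ B * ‖z‖) (ht : 0 < t) (htB : t * B ^ 2 ≤ 1) (htC : 2 * t ≤ C ^ 2)
    {x : E} (hx : ‖x‖ ≤ C * ‖T x‖) :
    ‖T x - algebraMap ℝ A t • T (Ts (T x))‖ ≤ √(1 - t / C ^ 2) * ‖T x‖ := by
  set w := T x
  rcases eq_or_ne w 0 with hw | hw
  · simp [hw]
  have hC : 0 < C ^ 2 := by linarith
  have hC0 : C ≠ 0 := by rintro rfl; norm_num at hC
  have hquot : t / C ^ 2 ≤ 1 / 2 := by rw [div_le_iff₀ hC]; linarith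
  set μ := t / (C ^ 2 * ‖w‖ ^ 2)
  have hμ : 0 ≤ μ := by positivity
  have hμM : μ * ‖w‖ ^ 2 = t / C ^ 2 := by simp only [μ]; field_simp
  have htb : μ • (⟪w, w⟫ * ⟪w, w⟫) ≤ t • ⟪Ts w, Ts w⟫ :=
    calc _ ≤ μ • ((C ^ 2 * ‖w‖ ^ 2) • ⟪Ts w, Ts w⟫) :=
          smul_le_smul_of_nonneg_left (inner_self_mul_self_le_smul_inner_adjoint hT hx) hμ
      _ = t • ⟪Ts w, Ts w⟫ := by rw [smul_smul]; congr 1; simp only [μ]; field_simp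
  have he : ⟪w - algebraMap ℝ A t • T (Ts w), w - algebraMap ℝ A t • T (Ts w)⟫ ≤
      algebraMap ℝ A ((1 - t / C ^ 2) * ‖w‖ ^ 2) :=
    calc _ ≤ ⟪w, w⟫ - t • ⟪Ts w, Ts w⟫ := inner_self_sub_smul_comp_adjoint_le hT hB ht.le htB w
      _ ≤ ⟪w, w⟫ - μ • (⟪w, w⟫ * ⟪w, w⟫) := sub_le_sub_left htb _
      _ ≤ algebraMap ℝ A (‖w‖ ^ 2 - μ * (‖w‖ ^ 2) ^ 2) :=
          CStarAlgebra.sub_smul_mul_self_le (inner_self_nonneg w)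
            (norm_sq_eq_norm_inner_self w).ge hμ (by nlinarith)
      _ = _ := by congr 1; rw [sq (‖w‖ ^ 2), ← mul_assoc, hμM]; ring
  refine le_of_pow_le_pow_left₀ two_ne_zero (by positivity) ?_
  rw [norm_sq_eq_norm_inner_self (A := A), mul_pow, Real.sq_sqrt (by linarith)]
  exact (CStarAlgebra.norm_le_iff_le_algebraMap _ (by nlinarith) (inner_self_nonneg _)).2 he

theorem surjOn_comp_adjoint_range [CompleteSpace E] [CompleteSpace F]
    (hT : ∀ x y, ⟪T x, y⟫ = ⟪x, Ts y⟫)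
    (hcl : IsClosed (LinearMap.range (T : E →ₗ[A] F) : Set F)) :
    Set.SurjOn (T ∘ Ts) (LinearMap.range (T : E →ₗ[A] F)) (LinearMap.range (T : E →ₗ[A] F)) := by
  let _ := normedSpaceReal A E
  let _ := normedSpaceReal A F
  set Tr : E →L[ℝ] F := AddMonoidHom.toRealLinearMap (T : E →+ F) T.continuous
  set Tsr : F →L[ℝ] E := AddMonoidHom.toRealLinearMap (Ts : F →+ E) Ts.continuous
  have hrange : (LinearMap.range (Tr : E →ₗ[ℝ] F) : Set F) = LinearMap.range (T : E →ₗ[A] F) := by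
    simp only [LinearMap.coe_range]; rfl
  rw [← hrange] at hcl ⊢
  have : CompleteSpace (LinearMap.range (Tr : E →ₗ[ℝ] F)) := hcl.completeSpace_coe
  obtain ⟨B, hB0, hB⟩ := Tr.bound
  obtain ⟨C, hC0, hpre⟩ :=
    Tr.rangeRestrict.exists_preimage_norm_le fun ⟨_, x, hx⟩ ↦ ⟨x, Subtype.ext hx⟩
  set t := min (B ^ 2)⁻¹ (C ^ 2 / 2)
  have ht : 0 < t := lt_min (by positivity) (by positivity)
  have htB : t * B ^ 2 ≤ 1 := by
    calc t * B ^ 2 ≤ (B ^ 2)⁻¹ * B ^ 2 := by gcongr; exact min_le_left _ _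
      _ = 1 := inv_mul_cancel₀ (by positivity)
  have htC : 2 * t ≤ C ^ 2 := by linarith [min_le_right (B ^ 2)⁻¹ (C ^ 2 / 2)]
  have hcontr : ∀ w ∈ LinearMap.range (Tr : E →ₗ[ℝ] F),
      ‖w - (t • Tr.comp Tsr) w‖ ≤ √(1 - t / C ^ 2) * ‖w‖ := by
    intro w hw
    obtain ⟨x, hx, hxC⟩ := hpre ⟨w, hw⟩
    obtain rfl : T x = w := congrArg Subtype.val hx
    exact norm_sub_smul_comp_adjoint_le hT hB ht htB htC hxC
  have hθ : √(1 - t / C ^ 2) < 1 := by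
    rw [Real.sqrt_lt' one_pos, one_pow, sub_lt_self_iff]; positivity
  have hsurj := (t • Tr.comp Tsr).surjOn_of_norm_sub_le hcl
    (fun w _ ↦ Submodule.smul_mem _ t (LinearMap.mem_range_self _ _))
    hθ hcontr
  intro d hd
  obtain ⟨y, hy, rfl⟩ := hsurj hd
  exact ⟨t • y, Submodule.smul_mem _ t hy, map_smul (Tr.comp Tsr) t y⟩

end Adjoint

section Laplacian

variable {U V W : Type*} [NormedAddCommGroup U] [Module A U] [PreHilbertModule A U]
  [NormedAddCommGroup V] [Module A V] [PreHilbertModule A V]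
  [NormedAddCommGroup W] [Module A W] [PreHilbertModule A W]
  {σ : U →L[A] V} {σs : V →L[A] U} {σ' : V →L[A] W} {σ's : W →L[A] V}

theorem injective_comp_adjoint_add_adjoint_comp (hσ : ∀ u v, ⟪σ u, v⟫ = ⟪u, σs v⟫)
    (hσ' : ∀ v w, ⟪σ' v, w⟫ = ⟪v, σ's w⟫)
    (hker : LinearMap.ker (σ' : V →ₗ[A] W) ≤ LinearMap.range (σ : U →ₗ[A] V)) :
    Function.Injective (σ.comp σs + σ's.comp σ') := by
  rw [injective_iff_map_eq_zero]
  intro v hv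
  have h' : ⟪σ's (σ' v), v⟫ = ⟪σ' v, σ' v⟫ := by
    rw [← star_inner, ← hσ', (isSelfAdjoint_inner_self _).star_eq]
  have hsum : ⟪σs v, σs v⟫ + ⟪σ' v, σ' v⟫ = 0 := by
    have hv' : σ (σs v) + σ's (σ' v) = 0 := hv
    rw [← hσ, ← h', ← inner_add_left, hv', inner_zero_left_s10]
  obtain ⟨h₁, h₂⟩ :=
    (add_eq_zero_iff_of_nonneg (inner_self_nonneg _) (inner_self_nonneg _)).1 hsum
  have hσsv : σs v = 0 := (inner_self_eq_zero _).1 h₁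
  obtain ⟨u, rfl⟩ := hker ((inner_self_eq_zero (A := A) _).1 h₂)
  rw [ContinuousLinearMap.coe_coe] at hσsv ⊢
  rw [← inner_self_eq_zero (A := A), hσ, hσsv, inner_zero_right_s10]

theorem surjective_comp_adjoint_add_adjoint_comp [CompleteSpace U] [CompleteSpace V]
    [CompleteSpace W] (hσ : ∀ u v, ⟪σ u, v⟫ = ⟪u, σs v⟫) (hσ' : ∀ v w, ⟪σ' v, w⟫ = ⟪v, σ's w⟫)
    (hexact : LinearMap.range (σ : U →ₗ[A] V) = LinearMap.ker (σ' : V →ₗ[A] W))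
    (hclosed : IsClosed (LinearMap.range (σ' : V →ₗ[A] W) : Set W)) :
    Function.Surjective (σ.comp σs + σ's.comp σ') := by
  intro v
  have hσ'σ (u : U) : σ' (σ u) = 0 := by
    simpa using (hexact ▸ LinearMap.mem_range_self (σ : U →ₗ[A] V) u :)
  obtain ⟨_, ⟨z, rfl⟩, hz⟩ := surjOn_comp_adjoint_range hσ' hclosed (LinearMap.mem_range_self _ v)
  have hn : v - (σ (σs z) + σ's (σ' z)) ∈ LinearMap.range (σ : U →ₗ[A] V) := by
    rw [hexact, LinearMap.mem_ker, ContinuousLinearMap.coe_coe, map_sub, map_add, hσ'σ, zero_add,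
      show σ' (σ's (σ' z)) = σ' v from hz, sub_self]
  have hcl : IsClosed (LinearMap.range (σ : U →ₗ[A] V) : Set V) := hexact ▸ σ'.isClosed_ker
  obtain ⟨_, ⟨u, rfl⟩, hu⟩ := surjOn_comp_adjoint_range hσ hcl hn
  refine ⟨z + σ u, ?_⟩
  simp only [add_apply, ContinuousLinearMap.comp_apply, map_add, hσ'σ,
    map_zero, add_zero, show σ (σs (σ u)) = _ from hu]
  abel

end Laplacian

end PreHilbertModule

/-- Lemma 9: let `U, V, W` be Hilbert `A`-modules (complete pre-Hilbert
`A`-modules) and `σ : U → V`, `σ' : V → W` adjointable maps with `Rng σ = Ker σ'` and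
`Rng σ'` closed. Then `Σ = σ ∘ σ* + σ'* ∘ σ'` is a Hilbert `A`-module automorphism of `V`,
i.e. bijective. -/
theorem laplacian_of_exact_sequence_bijective
    {A : Type*} [CStarAlgebra A] [PartialOrder A] [StarOrderedRing A]
    {U V W : Type*}
    [NormedAddCommGroup U] [Module A U] [PreHilbertModule A U] [CompleteSpace U]
    [NormedAddCommGroup V] [Module A V] [PreHilbertModule A V] [CompleteSpace V]
    [NormedAddCommGroup W] [Module A W] [PreHilbertModule A W] [CompleteSpace W]
    (σ : U →L[A] V) (σs : V →L[A] U) (σ' : V →L[A] W) (σ's : W →L[A] V)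
    (hσ : ∀ (u : U) (v : V), (inner A (σ u) v : A) = inner A u (σs v))
    (hσ' : ∀ (v : V) (w : W), (inner A (σ' v) w : A) = inner A v (σ's w))
    (hexact : LinearMap.range (σ : U →ₗ[A] V) = LinearMap.ker (σ' : V →ₗ[A] W))
    (hclosed : IsClosed (LinearMap.range (σ' : V →ₗ[A] W) : Set W)) :
    Function.Bijective (σ.comp σs + σ's.comp σ') :=
  ⟨PreHilbertModule.injective_comp_adjoint_add_adjoint_comp hσ hσ' hexact.ge,
    PreHilbertModule.surjective_comp_adjoint_add_adjoint_comp hσ hσ' hexact hclosed⟩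
end
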